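/- For all sufficiently large n, M(n,2,3,2,3) ≥ 0.24 · C(n,3); that is, every 2-coloring of the edges of K^3_n contains a monochromatic 2-tight component with at least 0.24 · C(n,3) edges. -/

import Mathlib

/-!
Fix a 2-colouring and let `M` be the size of its largest monochromatic tight component. Two
bounds on a colour class `Hᵢ` compete.

Distinct tight components have disjoint 2-shadows, and a component whose 2-shadow has `s` pairs
has at most `√2 s^{3/2} / 3` edges (Kruskal–Katona for triangles). Together with `|T| ≤ M` this
gives `|Hᵢ| ≤ (2M/9)^{1/3} C(n, 2)`.

At every vertex `v` the link graph of one of the two colours is connected, since a graph or its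
complement is. All edges of colour `i` through vertices `Uᵢ` with connected colour-`i` link lie in
one tight component, so `|Hᵢ| ≤ M + C(n - |Uᵢ|, 3)`, and `|U₀| + |U₁| ≥ n`.

If `M < 0.24 C(n, 3)`, then `(2M/9)^{1/3} ≤ 0.21 n` and the first bound makes both classes at
most `0.105 n³`; the second bound, applied to a colour with `|Uᵢ| ≥ n / 2`, then leaves too few
edges for `C(n, 3)`.
-/

open Finset

/-- The `s`-shadow of a hypergraph `H`: all `s`-element vertex sets contained in
some edge of `H`. -/
def hShadow {V : Type*} [DecidableEq V] (s : ℕ) (H : Finset (Finset V)) :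
    Finset (Finset V) :=
  H.biUnion fun e => e.powersetCard s

/-- One step of `t`-tight connectivity: both `a` and `b` are edges of `H` and they
share at least `t` vertices. -/
def TightStep {V : Type*} [DecidableEq V] (t : ℕ) (H : Finset (Finset V))
    (a b : Finset V) : Prop :=
  a ∈ H ∧ b ∈ H ∧ t ≤ (a ∩ b).card

/-- Two edges lie in the same `t`-tight component iff they are joined by a chain of
edges, consecutive ones sharing at least `t` vertices. -/
def TightConn {V : Type*} [DecidableEq V] (t : ℕ) (H : Finset (Finset V)) :
    Finset V → Finset V → Prop :=
  Relation.ReflTransGen (TightStep t H)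

open scoped Classical in
/-- The `t`-tight component of the edge `e` in the hypergraph `H`. -/
noncomputable def tightComponent {V : Type*} [DecidableEq V] (t : ℕ)
    (H : Finset (Finset V)) (e : Finset V) : Finset (Finset V) :=
  H.filter fun f => TightConn t H e f

/-- The `k`-uniform hypergraph `H i` of edges of `K^k_n` having color `i` under the
coloring `c`. -/
def colorClass (n r k : ℕ) (c : Finset (Fin n) → Fin r) (i : Fin r) :
    Finset (Finset (Fin n)) :=
  (Finset.univ.powersetCard k).filter fun e => c e = i

/-- `M(n,r,k,t,s;c)`: the largest number of vertex `s`-sets contained in the edges of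
a monochromatic `t`-tight component of the `r`-coloring `c` of `K^k_n`. -/
noncomputable def Mcol (n r k t s : ℕ) (c : Finset (Fin n) → Fin r) : ℕ :=
  Finset.univ.sup fun i : Fin r =>
    (colorClass n r k c i).sup fun e =>
      (hShadow s (tightComponent t (colorClass n r k c i) e)).card

/-- `M(n,r,k,t,s)`: the minimum of `M(n,r,k,t,s;c)` over all `r`-colorings `c` of
`K^k_n`. -/
noncomputable def Mmin (n r k t s : ℕ) : ℕ :=
  sInf {m | ∃ c : Finset (Fin n) → Fin r, Mcol n r k t s c = m}

section TightComponent

variable {V : Type*} [DecidableEq V] {t : ℕ} {H : Finset (Finset V)} {e f : Finset V}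

lemma TightConn.symm (h : TightConn t H e f) : TightConn t H f e :=
  haveI : Std.Symm (TightStep t H) := ⟨fun _ _ ⟨ha, hb, hab⟩ => ⟨hb, ha, by rwa [inter_comm]⟩⟩
  Relation.ReflTransGen.stdSymm.symm _ _ h

lemma mem_tightComponent : f ∈ tightComponent t H e ↔ f ∈ H ∧ TightConn t H e f := by
  simp only [tightComponent, mem_filter]

lemma tightComponent_subset : tightComponent t H e ⊆ H :=
  fun _ hf => (mem_tightComponent.mp hf).1

lemma mem_tightComponent_self (he : e ∈ H) : e ∈ tightComponent t H e :=
  mem_tightComponent.mpr ⟨he, .refl⟩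

lemma tightComponent_eq_of_mem (hf : f ∈ tightComponent t H e) :
    tightComponent t H f = tightComponent t H e := by
  have hef := (mem_tightComponent.mp hf).2
  ext g
  simp only [mem_tightComponent]
  exact and_congr_right fun _ => ⟨hef.trans, hef.symm.trans⟩

lemma tightComponent_eq_of_mem_hShadow {p : Finset V}
    (he : p ∈ hShadow t (tightComponent t H e)) (hf : p ∈ hShadow t (tightComponent t H f)) :
    tightComponent t H e = tightComponent t H f := by
  obtain ⟨e', he', hpe'⟩ := mem_biUnion.mp he
  obtain ⟨f', hf', hpf'⟩ := mem_biUnion.mp hf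
  rw [mem_powersetCard] at hpe' hpf'
  have hstep : TightStep t H e' f' :=
    ⟨tightComponent_subset he', tightComponent_subset hf',
      hpe'.2 ▸ card_le_card (subset_inter hpe'.1 hpf'.1)⟩
  have hf'e : f' ∈ tightComponent t H e :=
    mem_tightComponent.mpr ⟨tightComponent_subset hf',
      (mem_tightComponent.mp he').2.tail hstep⟩
  rw [← tightComponent_eq_of_mem hf'e, tightComponent_eq_of_mem hf']

lemma card_le_of_forall_tightConn {A : Finset (Finset V)} {M : ℕ} (hAH : A ⊆ H)
    (hA : ∀ e ∈ A, ∀ f ∈ A, TightConn t H e f)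
    (hM : ∀ e ∈ H, #(tightComponent t H e) ≤ M) : #A ≤ M := by
  obtain rfl | ⟨e, he⟩ := A.eq_empty_or_nonempty
  · exact Nat.zero_le M
  exact (card_le_card fun f hf => mem_tightComponent.mpr ⟨hAH hf, hA e he f hf⟩).trans
    (hM e (hAH he))

lemma pairwiseDisjoint_tightComponent :
    (H.image (tightComponent t H) : Set (Finset (Finset V))).PairwiseDisjoint id := by
  rw [coe_image]
  rintro _ ⟨e, -, rfl⟩ _ ⟨f, -, rfl⟩ hne
  exact disjoint_left.mpr fun g hge hgf =>
    hne ((tightComponent_eq_of_mem hge).symm.trans (tightComponent_eq_of_mem hgf))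

lemma pairwiseDisjoint_hShadow_tightComponent :
    (H.image (tightComponent t H) : Set (Finset (Finset V))).PairwiseDisjoint (hShadow t) := by
  rw [coe_image]
  rintro _ ⟨e, -, rfl⟩ _ ⟨f, -, rfl⟩ hne
  exact disjoint_left.mpr fun _ hpe hpf => hne (tightComponent_eq_of_mem_hShadow hpe hpf)

lemma biUnion_image_tightComponent : (H.image (tightComponent t H)).biUnion id = H := by
  ext f
  simp only [mem_biUnion, mem_image, id, exists_exists_and_eq_and]
  exact ⟨fun ⟨_, _, hf⟩ => tightComponent_subset hf,
    fun hf => ⟨f, hf, mem_tightComponent_self hf⟩⟩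

lemma card_of_mem_hShadow {s : ℕ} {p : Finset V} (hp : p ∈ hShadow s H) : #p = s := by
  obtain ⟨_, _, hp⟩ := mem_biUnion.mp hp
  exact (mem_powersetCard.mp hp).2

lemma hShadow_eq_self {s : ℕ} (hH : ∀ e ∈ H, #e = s) : hShadow s H = H := by
  ext f
  simp only [hShadow, mem_biUnion]
  constructor
  · rintro ⟨e, he, hf⟩
    rw [← hH e he, powersetCard_self, mem_singleton] at hf
    rwa [hf]
  · exact fun hf => ⟨f, hf, by rw [← hH f hf, powersetCard_self, mem_singleton]⟩

end TightComponent

section Triangles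

variable {V : Type*} [DecidableEq V] {E : Finset (Finset V)}

lemma exists_degree_mul_succ_le (hE : ∀ e ∈ E, #e = 2) (hne : E.Nonempty) :
    ∃ v, 0 < #{e ∈ E | v ∈ e} ∧ #{e ∈ E | v ∈ e} * (#{e ∈ E | v ∈ e} + 1) ≤ 2 * #E := by
  set S := E.biUnion id
  have hsub : ∀ e ∈ E, e ⊆ S := fun e he _ hx => mem_biUnion.mpr ⟨e, he, hx⟩
  have hpos : ∀ u ∈ S, 0 < #{e ∈ E | u ∈ e} := fun u hu => by
    obtain ⟨e, he, hue⟩ := mem_biUnion.mp hu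
    exact card_pos.mpr ⟨e, mem_filter.mpr ⟨he, hue⟩⟩
  obtain ⟨e₀, he₀⟩ := hne
  obtain ⟨x, hx⟩ := card_pos.mp (by rw [hE e₀ he₀]; omega : 0 < #e₀)
  obtain ⟨v, hvS, hmin⟩ := S.exists_min_image (fun u => #{e ∈ E | u ∈ e}) ⟨x, hsub e₀ he₀ hx⟩
  set d := #{e ∈ E | v ∈ e}
  have hdS : #S * d ≤ 2 * #E := by
    refine (le_sum_card_inter hmin).trans_eq ?_
    rw [sum_congr rfl fun e he => by rw [inter_eq_right.mpr (hsub e he), hE e he], sum_const,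
      smul_eq_mul, mul_comm]
  have hdlt : d ≤ #S - 1 := by
    rw [← card_erase_of_mem hvS, ← Nat.choose_one_right (#(S.erase v)), ← card_powersetCard]
    refine card_le_card_of_injOn (·.erase v) (fun e he => ?_) fun s hs t ht =>
      erase_injOn' v (mem_filter.mp hs).2 (mem_filter.mp ht).2
    obtain ⟨he, hve⟩ := mem_filter.mp he
    exact mem_powersetCard.mpr ⟨erase_subset_erase v (hsub e he),
      by rw [card_erase_of_mem hve, hE e he]⟩
  refine ⟨v, hpos v hvS, le_trans ?_ (mul_comm d #S ▸ hdS)⟩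
  exact Nat.mul_le_mul_left d (by have := card_pos.mpr ⟨v, hvS⟩; omega)

lemma three_halves_mul_add_le {d y : ℝ} (hy : 0 ≤ y) (hd : 1 ≤ d) (h : d * (d - 1) ≤ 2 * y) :
    3 / 2 * (d * (d - 1)) + y * √(2 * y) ≤ (y + d) * √(2 * (y + d)) := by
  have hs : d - 1 ≤ √(2 * y) :=
    (Real.le_sqrt (by linarith) (by linarith)).mpr (by nlinarith)
  have key : (y + 3 / 2 * d) * √(2 * y) ≤ (y + d) * √(2 * (y + d)) := by
    refine (pow_le_pow_iff_left₀ (by positivity) (by positivity) two_ne_zero).mp ?_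
    rw [mul_pow, mul_pow, Real.sq_sqrt (by linarith), Real.sq_sqrt (by linarith)]
    nlinarith [mul_nonneg hy (sq_nonneg d), pow_nonneg (by linarith : (0 : ℝ) ≤ d) 3]
  nlinarith

variable [Fintype V]

def triangles (E : Finset (Finset V)) : Finset (Finset V) :=
  {t ∈ univ.powersetCard 3 | t.powersetCard 2 ⊆ E}

lemma triangles_empty : triangles (∅ : Finset (Finset V)) = ∅ := by
  refine filter_false_of_mem fun t ht hsub => ?_
  obtain ⟨p, hp⟩ := powersetCard_nonempty (n := 2).mpr (by rw [(mem_powersetCard.mp ht).2]; omega)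
  exact notMem_empty p (hsub hp)

lemma filter_notMem_triangles_subset (v : V) :
    {t ∈ triangles E | v ∉ t} ⊆ triangles {e ∈ E | v ∉ e} := by
  intro t ht
  simp only [triangles, mem_filter] at ht ⊢
  exact ⟨ht.1.1, fun p hp =>
    mem_filter.mpr ⟨ht.1.2 hp, fun hvp => ht.2 ((mem_powersetCard.mp hp).1 hvp)⟩⟩

lemma card_filter_mem_triangles_le (hE : ∀ e ∈ E, #e = 2) (v : V) :
    #{t ∈ triangles E | v ∈ t} ≤ (#{e ∈ E | v ∈ e}).choose 2 := by
  set N := {e ∈ E | v ∈ e}.biUnion (·.erase v)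
  have hN : #N ≤ #{e ∈ E | v ∈ e} := by
    refine (card_biUnion_le_card_mul _ _ 1 fun e he => ?_).trans_eq (mul_one _)
    rw [mem_filter] at he
    rw [card_erase_of_mem he.2, hE e he.1]
  have hmaps : ∀ t ∈ {t ∈ triangles E | v ∈ t}, t.erase v ∈ N.powersetCard 2 := by
    intro t ht
    simp only [triangles, mem_filter, mem_powersetCard] at ht
    obtain ⟨⟨⟨-, ht3⟩, hpairs⟩, hvt⟩ := ht
    refine mem_powersetCard.mpr ⟨fun x hx => ?_, by rw [card_erase_of_mem hvt, ht3]⟩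
    obtain ⟨hxv, hxt⟩ := mem_erase.mp hx
    have hvx : {v, x} ∈ E := hpairs (mem_powersetCard.mpr
      ⟨insert_subset hvt (singleton_subset_iff.mpr hxt), card_pair (Ne.symm hxv)⟩)
    exact mem_biUnion.mpr ⟨{v, x}, mem_filter.mpr ⟨hvx, mem_insert_self v _⟩,
      mem_erase.mpr ⟨hxv, mem_insert_of_mem (mem_singleton_self x)⟩⟩
  calc #{t ∈ triangles E | v ∈ t} ≤ #(N.powersetCard 2) :=
        card_le_card_of_injOn _ hmaps fun s hs t ht =>
          erase_injOn' v (mem_filter.mp hs).2 (mem_filter.mp ht).2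
    _ = (#N).choose 2 := card_powersetCard _ _
    _ ≤ _ := Nat.choose_le_choose 2 hN

/-- Kruskal–Katona for triangles. Delete a vertex of minimum positive degree `d`: it lies in at
most `C(d, 2)` triangles, and `d (d + 1) ≤ 2m`. -/
theorem three_mul_card_triangles_le (hE : ∀ e ∈ E, #e = 2) :
    3 * (#(triangles E) : ℝ) ≤ #E * √(2 * #E) := by
  induction E using Finset.strongInduction with
  | H E ih =>
  obtain rfl | hne := E.eq_empty_or_nonempty
  · simp [triangles_empty]
  obtain ⟨v, hpos, hdeg⟩ := exists_degree_mul_succ_le hE hne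
  set d := #{e ∈ E | v ∈ e}
  set E' := {e ∈ E | v ∉ e}
  obtain ⟨e, he, hve⟩ : ∃ e ∈ E, v ∈ e := by simpa [d, filter_nonempty_iff] using card_pos.mp hpos
  have ih' := ih E' (filter_ssubset.mpr ⟨e, he, not_not.mpr hve⟩)
    fun e he => hE e (mem_filter.mp he).1
  have hcard : (#E : ℝ) = d + #E' := by
    exact_mod_cast (card_filter_add_card_filter_not (s := E) (p := (v ∈ ·))).symm
  have htri : #(triangles E) ≤ d.choose 2 + #(triangles E') := by
    rw [← card_filter_add_card_filter_not (s := triangles E) (p := (v ∈ ·))]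
    exact add_le_add (card_filter_mem_triangles_le hE v)
      (card_le_card (filter_notMem_triangles_subset v))
  have hdeg' : (d : ℝ) * (d + 1) ≤ 2 * #E := by exact_mod_cast hdeg
  calc 3 * (#(triangles E) : ℝ) ≤ 3 * ((d.choose 2 : ℕ) + #(triangles E') : ℝ) := by
        exact_mod_cast Nat.mul_le_mul_left 3 htri
    _ ≤ 3 / 2 * (d * (d - 1)) + #E' * √(2 * #E') := by rw [Nat.cast_choose_two]; linarith
    _ ≤ (#E' + d) * √(2 * (#E' + d)) :=
        three_halves_mul_add_le (by positivity) (by exact_mod_cast hpos) (by nlinarith)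
    _ = #E * √(2 * #E) := by rw [hcard, add_comm (d : ℝ)]

end Triangles

section ComponentBound

variable {V : Type*} [DecidableEq V] [Fintype V] {H T : Finset (Finset V)}

lemma subset_triangles_hShadow (hT : ∀ e ∈ T, #e = 3) : T ⊆ triangles (hShadow 2 T) :=
  fun e he => mem_filter.mpr
    ⟨mem_powersetCard.mpr ⟨subset_univ e, hT e he⟩, fun _ hp => mem_biUnion.mpr ⟨e, he, hp⟩⟩

lemma card_le_mul_card_hShadow (hT : ∀ e ∈ T, #e = 3) {M : ℕ} (hTM : #T ≤ M) {b : ℝ}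
    (hb : 0 ≤ b) (hbM : 2 / 9 * M ≤ b ^ 3) : (#T : ℝ) ≤ b * #(hShadow 2 T) := by
  set s : ℝ := (#(hShadow 2 T) : ℝ)
  have h3 : 3 * (#T : ℝ) ≤ s * √(2 * s) := by
    have : (#T : ℝ) ≤ #(triangles (hShadow 2 T)) :=
      by exact_mod_cast card_le_card (subset_triangles_hShadow hT)
    linarith [three_mul_card_triangles_le fun _ hp => card_of_mem_hShadow (H := T) hp]
  have h9 : 9 * (#T : ℝ) ^ 2 ≤ 2 * s ^ 3 := by
    have := pow_le_pow_left₀ (by positivity) h3 2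
    rw [mul_pow, mul_pow, Real.sq_sqrt (by positivity)] at this
    linarith
  refine (pow_le_pow_iff_left₀ (by positivity) (by positivity) three_ne_zero).mp ?_
  calc (#T : ℝ) ^ 3 = (#T) ^ 2 * #T := by ring
    _ ≤ (2 / 9 * s ^ 3) * M :=
        mul_le_mul (by linarith) (by exact_mod_cast hTM) (by positivity) (by positivity)
    _ = s ^ 3 * (2 / 9 * M) := by ring
    _ ≤ s ^ 3 * b ^ 3 := by gcongr
    _ = (b * s) ^ 3 := by ring

/-- Distinct tight components have disjoint 2-shadows, so their 2-shadows together use at most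
`C(|V|, 2)` pairs. -/
theorem card_le_mul_choose_two (hH : ∀ e ∈ H, #e = 3) {M : ℕ}
    (hM : ∀ e ∈ H, #(tightComponent 2 H e) ≤ M) {b : ℝ} (hb : 0 ≤ b) (hbM : 2 / 9 * M ≤ b ^ 3) :
    (#H : ℝ) ≤ b * (Fintype.card V).choose 2 := by
  set P := H.image (tightComponent 2 H)
  have hshadow : #(P.biUnion (hShadow 2)) ≤ (Fintype.card V).choose 2 := by
    rw [← card_univ, ← card_powersetCard]
    refine card_le_card fun p hp => ?_
    obtain ⟨T, -, hpT⟩ := mem_biUnion.mp hp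
    exact mem_powersetCard.mpr ⟨subset_univ p, card_of_mem_hShadow hpT⟩
  calc (#H : ℝ) = ∑ T ∈ P, (#T : ℝ) := by
        rw [← Nat.cast_sum]
        conv_lhs => rw [← biUnion_image_tightComponent (t := 2) (H := H)]
        rw [card_biUnion pairwiseDisjoint_tightComponent]
        rfl
    _ ≤ ∑ T ∈ P, b * #(hShadow 2 T) := sum_le_sum fun T hT => by
        obtain ⟨e, he, rfl⟩ := mem_image.mp hT
        exact card_le_mul_card_hShadow (fun f hf => hH f (tightComponent_subset hf)) (hM e he)
          hb hbM
    _ = b * #(P.biUnion (hShadow 2)) := by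
        rw [← mul_sum, card_biUnion pairwiseDisjoint_hShadow_tightComponent, Nat.cast_sum]
    _ ≤ b * (Fintype.card V).choose 2 := by gcongr

end ComponentBound

section Link

variable {V : Type*} [DecidableEq V] {H : Finset (Finset V)} {e f : Finset V} {u v w : V}

def link (H : Finset (Finset V)) (v : V) : SimpleGraph {x : V // x ≠ v} where
  Adj x y := x ≠ y ∧ {v, x.1, y.1} ∈ H
  symm := ⟨fun _ _ h => ⟨h.1.symm, by rw [pair_comm]; exact h.2⟩⟩
  loopless := ⟨fun _ h => h.1 rfl⟩

@[simp]
lemma link_adj {x y : {x : V // x ≠ v}} : (link H v).Adj x y ↔ x ≠ y ∧ {v, x.1, y.1} ∈ H :=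
  Iff.rfl

lemma tightStep_of_mem_of_mem (he : e ∈ H) (hf : f ∈ H) (huw : u ≠ w) (hue : u ∈ e)
    (hwe : w ∈ e) (huf : u ∈ f) (hwf : w ∈ f) : TightStep 2 H e f :=
  ⟨he, hf, (card_pair huw).symm.le.trans (card_le_card (insert_subset (mem_inter.mpr ⟨hue, huf⟩)
    (singleton_subset_iff.mpr (mem_inter.mpr ⟨hwe, hwf⟩))))⟩

/-- Consecutive edges `{v, zᵢ, zᵢ₊₁}` along a path in the link of `v` share the pair
`{v, zᵢ₊₁}`. -/
lemma tightConn_of_reachable_link {x z : {x : V // x ≠ v}} (hxz : (link H v).Reachable x z)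
    (he : e ∈ H) (hve : v ∈ e) (hxe : x.1 ∈ e) (hf : f ∈ H) (hvf : v ∈ f) (hzf : z.1 ∈ f) :
    TightConn 2 H e f := by
  rw [SimpleGraph.reachable_iff_reflTransGen] at hxz
  induction hxz generalizing f with
  | refl => exact .single (tightStep_of_mem_of_mem he hf (Ne.symm x.2) hve hxe hvf hzf)
  | @tail y z _ hyz ih =>
    have hg := (link_adj.mp hyz).2
    exact (ih hg (mem_insert_self _ _) (by simp)).tail
      (tightStep_of_mem_of_mem hg hf (Ne.symm z.2) (mem_insert_self _ _) (by simp) hvf hzf)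

lemma tightConn_of_preconnected_link (hH : ∀ e ∈ H, #e = 3) (hv : (link H v).Preconnected)
    (he : e ∈ H) (hve : v ∈ e) (hf : f ∈ H) (hvf : v ∈ f) : TightConn 2 H e f := by
  obtain ⟨x, hxe, hxv⟩ := exists_mem_ne (by rw [hH e he]; omega) v
  obtain ⟨z, hzf, hzv⟩ := exists_mem_ne (by rw [hH f hf]; omega) v
  exact tightConn_of_reachable_link (hv ⟨x, hxv⟩ ⟨z, hzv⟩) he hve hxe hf hvf hzf

variable [Fintype V]

lemma exists_mem_of_preconnected_link (hV : 3 ≤ Fintype.card V) (hv : (link H v).Preconnected)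
    (u : V) : ∃ g ∈ H, u ∈ g ∧ v ∈ g := by
  obtain ⟨x, hux⟩ : ∃ x : {x : V // x ≠ v}, u = x.1 ∨ u = v := by
    by_cases huv : u = v
    · obtain ⟨x, -, hx⟩ := exists_mem_ne (s := univ) (by rw [card_univ]; omega) v
      exact ⟨⟨x, hx⟩, Or.inr huv⟩
    · exact ⟨⟨u, huv⟩, Or.inl rfl⟩
  obtain ⟨y, hy, hyx⟩ := exists_mem_ne (s := univ.erase v)
    (by rw [card_erase_of_mem (mem_univ v), card_univ]; omega) x.1
  have : Nontrivial {x : V // x ≠ v} :=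
    ⟨x, ⟨y, (mem_erase.mp hy).1⟩, fun h => hyx (congrArg Subtype.val h).symm⟩
  obtain ⟨z, hxz⟩ := hv.exists_adj_of_nontrivial x
  exact ⟨_, (link_adj.mp hxz).2, by rcases hux with rfl | rfl <;> simp, mem_insert_self _ _⟩

lemma tightConn_of_preconnected_links (hH : ∀ e ∈ H, #e = 3) (hV : 3 ≤ Fintype.card V)
    (hu : (link H u).Preconnected) (hw : (link H w).Preconnected) (he : e ∈ H) (hue : u ∈ e)
    (hf : f ∈ H) (hwf : w ∈ f) : TightConn 2 H e f := by
  obtain ⟨g, hg, hug, hwg⟩ := exists_mem_of_preconnected_link hV hw u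
  exact (tightConn_of_preconnected_link hH hu he hue hg hug).trans
    (tightConn_of_preconnected_link hH hw hg hwg hf hwf)

/-- The edges meeting `U` lie in a single tight component; the others are triples in `Uᶜ`. -/
theorem card_le_add_choose_three (hH : ∀ e ∈ H, #e = 3) (hV : 3 ≤ Fintype.card V) {M : ℕ}
    (hM : ∀ e ∈ H, #(tightComponent 2 H e) ≤ M) {U : Finset V}
    (hU : ∀ u ∈ U, (link H u).Preconnected) : #H ≤ M + (Fintype.card V - #U).choose 3 := by
  rw [← card_filter_add_card_filter_not (s := H) (p := fun e => ∃ u ∈ U, u ∈ e)]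
  refine add_le_add ?_ ?_
  · refine card_le_of_forall_tightConn (filter_subset _ _) (fun e he f hf => ?_) hM
    obtain ⟨he, u, hu, hue⟩ := mem_filter.mp he
    obtain ⟨hf, w, hw, hwf⟩ := mem_filter.mp hf
    exact tightConn_of_preconnected_links hH hV (hU u hu) (hU w hw) he hue hf hwf
  · rw [← card_compl, ← card_powersetCard]
    refine card_le_card fun e he => ?_
    obtain ⟨he, heU⟩ := mem_filter.mp he
    exact mem_powersetCard.mpr ⟨fun x hx => mem_compl.mpr fun hxU => heU ⟨x, hxU, hx⟩, hH e he⟩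

end Link

section Coloring

variable {n r k : ℕ} (c : Finset (Fin n) → Fin r)

lemma mem_colorClass {i : Fin r} {e : Finset (Fin n)} :
    e ∈ colorClass n r k c i ↔ #e = k ∧ c e = i := by
  simp [colorClass]

lemma sum_card_colorClass : ∑ i, #(colorClass n r k c i) = n.choose k := by
  refine (card_eq_sum_card_fiberwise fun _ _ => mem_univ (c _)).symm.trans ?_
  rw [card_powersetCard, card_univ, Fintype.card_fin]

lemma card_tightComponent_le_Mcol {t : ℕ} {i : Fin r} {e : Finset (Fin n)}
    (he : e ∈ colorClass n r k c i) :
    #(tightComponent t (colorClass n r k c i) e) ≤ Mcol n r k t k c := by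
  rw [← hShadow_eq_self fun f hf => ((mem_colorClass c).mp (tightComponent_subset hf)).1]
  exact (le_sup (f := fun e => #(hShadow k (tightComponent t (colorClass n r k c i) e))) he).trans
    (le_sup (f := fun i => (colorClass n r k c i).sup fun e =>
      #(hShadow k (tightComponent t (colorClass n r k c i) e))) (mem_univ i))

lemma compl_link_colorClass (c : Finset (Fin n) → Fin 2) (v : Fin n) :
    (link (colorClass n 2 3 c 0) v)ᶜ = link (colorClass n 2 3 c 1) v := by
  ext x y
  simp only [SimpleGraph.compl_adj, link_adj, mem_colorClass]
  refine and_congr_right fun hxy => ?_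
  have h3 : #{v, x.1, y.1} = 3 := card_eq_three.mpr
    ⟨v, x, y, Ne.symm x.2, Ne.symm y.2, Subtype.coe_ne_coe.mpr hxy, rfl⟩
  simp only [hxy, h3, ne_eq, not_false_eq_true, true_and, Fin.ext_iff]
  omega

lemma link_colorClass_preconnected (c : Finset (Fin n) → Fin 2) (v : Fin n) :
    (link (colorClass n 2 3 c 0) v).Preconnected ∨ (link (colorClass n 2 3 c 1) v).Preconnected := by
  rw [← compl_link_colorClass]
  exact (link _ v).connected_or_preconnected_compl.imp_left SimpleGraph.Connected.preconnected

end Coloring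

lemma le_of_card_bounds {n M R B a b : ℕ} (hn : 1000 ≤ n) (hab : n ≤ a + b)
    (hRB : R + B = n.choose 3) (hR : R ≤ M + (n - a).choose 3) (hB : B ≤ M + (n - b).choose 3)
    (hRx : ∀ x : ℝ, 0 ≤ x → 2 / 9 * M ≤ x ^ 3 → (R : ℝ) ≤ x * n.choose 2)
    (hBx : ∀ x : ℝ, 0 ≤ x → 2 / 9 * M ≤ x ^ 3 → (B : ℝ) ≤ x * n.choose 2) :
    (0.24 : ℝ) * n.choose 3 ≤ M := by
  wlog ha : 2 * (n - a) ≤ n generalizing R B a b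
  · exact this (by omega) (add_comm R B ▸ hRB) hB hR hBx hRx (by omega)
  by_contra! hM
  have hC3 : (n.choose 3 : ℝ) ≤ n ^ 3 / 6 := by
    simpa [Nat.factorial] using Nat.choose_le_pow_div (α := ℝ) 3 n
  have hC3' : ((n : ℝ) - 2) ^ 3 / 6 ≤ n.choose 3 := by
    have := Nat.pow_le_choose (α := ℝ) 3 n
    rwa [show n + 1 - 3 = n - 2 by omega, Nat.cast_sub (by omega)] at this
  have hC2 : (n.choose 2 : ℝ) ≤ n ^ 2 / 2 := by
    simpa [Nat.factorial] using Nat.choose_le_pow_div (α := ℝ) 2 n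
  have hCa : ((n - a).choose 3 : ℝ) ≤ n ^ 3 / 48 := by
    have h2 : 2 * ((n - a : ℕ) : ℝ) ≤ n := by exact_mod_cast ha
    have h3 := pow_le_pow_left₀ (Nat.cast_nonneg _) (show ((n - a : ℕ) : ℝ) ≤ n / 2 by linarith) 3
    have := Nat.choose_le_pow_div (α := ℝ) 3 (n - a)
    norm_num [Nat.factorial] at this
    linarith
  have hnr : (1000 : ℝ) ≤ n := by exact_mod_cast hn
  have hM' : (M : ℝ) < n ^ 3 / 25 := by norm_num at hM; linarith
  have hBsmall : (B : ℝ) ≤ 21 / 200 * n ^ 3 := by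
    have hx : 2 / 9 * (M : ℝ) ≤ (21 / 100 * n) ^ 3 := by nlinarith
    calc (B : ℝ) ≤ 21 / 100 * n * n.choose 2 := hBx _ (by positivity) hx
      _ ≤ 21 / 100 * n * (n ^ 2 / 2) := by gcongr
      _ = 21 / 200 * n ^ 3 := by ring
  have hR' : (R : ℝ) ≤ M + n ^ 3 / 48 := by
    have : (R : ℝ) ≤ M + ((n - a).choose 3 : ℝ) := by exact_mod_cast hR
    linarith
  have hRB' : (R : ℝ) + B = n.choose 3 := by exact_mod_cast hRB
  have hcube : (n : ℝ) ^ 3 - 6 * n ^ 2 ≤ (n - 2) ^ 3 := by nlinarith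
  have hn3 : 1000 * (n : ℝ) ^ 2 ≤ n ^ 3 := by nlinarith
  norm_num at hM
  linarith

theorem mul_choose_three_le_Mcol {n : ℕ} (hn : 1000 ≤ n) (c : Finset (Fin n) → Fin 2) :
    (0.24 : ℝ) * n.choose 3 ≤ Mcol n 2 3 2 3 c := by
  classical
  set H := colorClass n 2 3 c
  have hH : ∀ i, ∀ e ∈ H i, #e = 3 := fun i e he => ((mem_colorClass c).mp he).1
  have hM : ∀ i, ∀ e ∈ H i, #(tightComponent 2 (H i) e) ≤ Mcol n 2 3 2 3 c :=
    fun i e he => card_tightComponent_le_Mcol c he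
  set U : Fin 2 → Finset (Fin n) := fun i => {v | (link (H i) v).Preconnected}
  have hU : ∀ i, ∀ u ∈ U i, (link (H i) u).Preconnected := fun i u hu => (mem_filter.mp hu).2
  have hV : 3 ≤ Fintype.card (Fin n) := by rw [Fintype.card_fin]; omega
  have hcover : n ≤ #(U 0) + #(U 1) := by
    calc n = #(univ : Finset (Fin n)) := by simp
      _ ≤ #(U 0 ∪ U 1) := card_le_card ?_
      _ ≤ #(U 0) + #(U 1) := card_union_le _ _
    exact fun v _ => (link_colorClass_preconnected c v).elim
      (fun h => mem_union_left _ (mem_filter.mpr ⟨mem_univ v, h⟩))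
      (fun h => mem_union_right _ (mem_filter.mpr ⟨mem_univ v, h⟩))
  refine le_of_card_bounds (R := #(H 0)) (B := #(H 1)) hn hcover ?_ ?_ ?_ ?_ ?_
  · simpa [Fin.sum_univ_two] using sum_card_colorClass (k := 3) c
  · simpa using card_le_add_choose_three (hH 0) hV (hM 0) (hU 0)
  · simpa using card_le_add_choose_three (hH 1) hV (hM 1) (hU 1)
  · exact fun x hx hxM => by simpa using card_le_mul_choose_two (hH 0) (hM 0) hx hxM
  · exact fun x hx hxM => by simpa using card_le_mul_choose_two (hH 1) (hM 1) hx hxM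

/-- For all sufficiently large `n`, `M(n,2,3,2,3) ≥ 0.24 * C(n,3)`. -/
theorem statement19 :
    ∃ N : ℕ, ∀ n : ℕ, N ≤ n →
      (0.24 : ℝ) * (n.choose 3 : ℝ) ≤ (Mmin n 2 3 2 3 : ℝ) := by
  refine ⟨1000, fun n hn => ?_⟩
  obtain ⟨c, hc⟩ : Mmin n 2 3 2 3 ∈ {m | ∃ c : Finset (Fin n) → Fin 2, Mcol n 2 3 2 3 c = m} :=
    Nat.sInf_mem ⟨_, fun _ => 0, rfl⟩
  rw [← hc]
  exact mul_choose_three_le_Mcol hn c
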